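/- arXiv:math/0509553 — 2 statements merged into one kernel-verified Lean document; each statement's English description precedes it below -/
import Mathlib

section
/- Set c_μ = D_μ(∞). For all 0 ≤ v₁ ≤ v₂ < c_μ one has μ̄(D_μ⁻¹(v₁)) − μ̄(D_μ⁻¹(v₂)) = ∫_{v₁}^{v₂} n([D_μ⁻¹(v),∞)) dv, and μ̄(G_μ⁻¹(v₂)) − μ̄(G_μ⁻¹(v₁)) = ∫_{v₁}^{v₂} n((−∞,G_μ⁻¹(v)]) dv. -/
open MeasureTheory Filter
open scoped ENNReal Topology Classical

/-- Topological support of a Borel measure on ℝ. -/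
def measSupport (μ : MeasureTheory.Measure ℝ) : Set ℝ :=
  {x | ∀ U : Set ℝ, IsOpen U → x ∈ U → 0 < μ U}

/-- `D_μ(y) = ∫_{[0,y]} n([s,∞))⁻¹ dμ(s)` for `y ≥ 0` (equal to `0` for `y < 0`). -/
noncomputable def Dmu (μ n : MeasureTheory.Measure ℝ) (y : ℝ) : ℝ≥0∞ :=
  ∫⁻ s in Set.Icc (0 : ℝ) y, (n (Set.Ici s))⁻¹ ∂μ

/-- `G_μ(x) = ∫_{[x,0]} n((−∞,s])⁻¹ dμ(s)` for `x ≤ 0` (equal to `0` for `x > 0`). -/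
noncomputable def Gmu (μ n : MeasureTheory.Measure ℝ) (x : ℝ) : ℝ≥0∞ :=
  ∫⁻ s in Set.Icc x (0 : ℝ), (n (Set.Iic s))⁻¹ ∂μ

/-- The set `{y ≥ 0 : D_μ(y) > v}`; its infimum is the right-continuous inverse
`D_μ⁻¹(v)`, with `D_μ⁻¹(v) = ∞` when the set is empty. -/
def DinvSet (μ n : MeasureTheory.Measure ℝ) (v : ℝ≥0∞) : Set ℝ :=
  {y : ℝ | 0 ≤ y ∧ v < Dmu μ n y}

/-- The set `{x ≤ 0 : G_μ(x) > v}`; its supremum is the right-continuous inverse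
`G_μ⁻¹(v)`, with `G_μ⁻¹(v) = −∞` when the set is empty. -/
def GinvSet (μ n : MeasureTheory.Measure ℝ) (v : ℝ≥0∞) : Set ℝ :=
  {x : ℝ | x ≤ 0 ∧ v < Gmu μ n x}

/-- `μ̄(D_μ⁻¹(v))`, with the convention `μ̄(∞) = 0`. -/
noncomputable def mubarDinv (μ n : MeasureTheory.Measure ℝ) (v : ℝ≥0∞) : ℝ :=
  if (DinvSet μ n v).Nonempty then (μ (Set.Ici (sInf (DinvSet μ n v)))).toReal else 0

/-- `μ̄(G_μ⁻¹(v))`, with the convention `μ̄(−∞) = 1`. -/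
noncomputable def mubarGinv (μ n : MeasureTheory.Measure ℝ) (v : ℝ≥0∞) : ℝ :=
  if (GinvSet μ n v).Nonempty then (μ (Set.Ici (sSup (GinvSet μ n v)))).toReal else 1

/-- `n([D_μ⁻¹(v),∞))`, with the convention that it is `0` when `D_μ⁻¹(v) = ∞`. -/
noncomputable def nDinv (μ n : MeasureTheory.Measure ℝ) (v : ℝ≥0∞) : ℝ≥0∞ :=
  if (DinvSet μ n v).Nonempty then n (Set.Ici (sInf (DinvSet μ n v))) else 0

/-- `n((−∞,G_μ⁻¹(v)])`, with the convention that it is `0` when `G_μ⁻¹(v) = −∞`. -/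
noncomputable def nGinv (μ n : MeasureTheory.Measure ℝ) (v : ℝ≥0∞) : ℝ≥0∞ :=
  if (GinvSet μ n v).Nonempty then n (Set.Iic (sSup (GinvSet μ n v))) else 0

/-- The integrand `[n([s,∞)) · (1 + μ̄(s) − μ̄(G_μ⁻¹(D_μ(s))))]⁻¹` of `ψ₊`. -/
noncomputable def psiPlusIntegrand (μ n : MeasureTheory.Measure ℝ) (s : ℝ) : ℝ≥0∞ :=
  (n (Set.Ici s) *
    ENNReal.ofReal (1 + (μ (Set.Ici s)).toReal - mubarGinv μ n (Dmu μ n s)))⁻¹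

/-- `ψ₊(y) = ∫_{[0,y]} [n([s,∞)) · (1 + μ̄(s) − μ̄(G_μ⁻¹(D_μ(s))))]⁻¹ dμ(s)`. -/
noncomputable def psiPlus (μ n : MeasureTheory.Measure ℝ) (y : ℝ) : ℝ≥0∞ :=
  ∫⁻ s in Set.Icc (0 : ℝ) y, psiPlusIntegrand μ n s ∂μ

/-- The integrand `[n((−∞,s]) · (1 + μ̄(D_μ⁻¹(G_μ(s))) − μ̄(s))]⁻¹` of `ψ₋`. -/
noncomputable def psiMinusIntegrand (μ n : MeasureTheory.Measure ℝ) (s : ℝ) : ℝ≥0∞ :=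
  (n (Set.Iic s) *
    ENNReal.ofReal (1 + mubarDinv μ n (Gmu μ n s) - (μ (Set.Ici s)).toReal))⁻¹

/-- `ψ₋(z) = ∫_{[−z,0]} [n((−∞,s]) · (1 + μ̄(D_μ⁻¹(G_μ(s))) − μ̄(s))]⁻¹ dμ(s)`. -/
noncomputable def psiMinus (μ n : MeasureTheory.Measure ℝ) (z : ℝ) : ℝ≥0∞ :=
  ∫⁻ s in Set.Icc (-z) (0 : ℝ), psiMinusIntegrand μ n s ∂μ

/-- The set `{y ≥ 0 : ψ₊(y) ≥ l}` whose infimum is the left-continuous inverse `φ₊(l)`. -/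
def phiPlusSet (μ n : MeasureTheory.Measure ℝ) (l : ℝ) : Set ℝ :=
  {y : ℝ | 0 ≤ y ∧ ENNReal.ofReal l ≤ psiPlus μ n y}

/-- The set `{z ≥ 0 : ψ₋(z) ≥ l}` whose infimum is the left-continuous inverse `φ₋(l)`. -/
def phiMinusSet (μ n : MeasureTheory.Measure ℝ) (l : ℝ) : Set ℝ :=
  {z : ℝ | 0 ≤ z ∧ ENNReal.ofReal l ≤ psiMinus μ n z}

/-- `φ₊(l) = inf{y ≥ 0 : ψ₊(y) ≥ l}`. -/
noncomputable def phiPlus (μ n : MeasureTheory.Measure ℝ) (l : ℝ) : ℝ :=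
  sInf (phiPlusSet μ n l)

/-- `φ₋(l) = inf{z ≥ 0 : ψ₋(z) ≥ l}`. -/
noncomputable def phiMinus (μ n : MeasureTheory.Measure ℝ) (l : ℝ) : ℝ :=
  sInf (phiMinusSet μ n l)

/-- `n([φ₊(l),∞))`, with the convention that it is `0` when `φ₊(l) = inf ∅ = ∞`. -/
noncomputable def nPhiPlus (μ n : MeasureTheory.Measure ℝ) (l : ℝ) : ℝ≥0∞ :=
  if (phiPlusSet μ n l).Nonempty then n (Set.Ici (phiPlus μ n l)) else 0

/-- `n((−∞,−φ₋(l)])`, with the convention that it is `0` when `φ₋(l) = inf ∅ = ∞`. -/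
noncomputable def nPhiMinus (μ n : MeasureTheory.Measure ℝ) (l : ℝ) : ℝ≥0∞ :=
  if (phiMinusSet μ n l).Nonempty then n (Set.Iic (-(phiMinus μ n l))) else 0

/-- `∫₀^L [n((−∞,−φ₋(s)]) + n([φ₊(s),∞))] ds` for an upper limit `L ∈ [0,∞]`. -/
noncomputable def cutInt (μ n : MeasureTheory.Measure ℝ) (L : ℝ≥0∞) : ℝ≥0∞ :=
  ∫⁻ s in {s : ℝ | 0 < s ∧ ENNReal.ofReal s < L},
    (nPhiMinus μ n s + nPhiPlus μ n s)

/-- `exp(−a)` for `a ∈ [0,∞]`, with `exp(−∞) = 0`. -/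
noncomputable def expNegE (a : ℝ≥0∞) : ℝ :=
  if a = ⊤ then 0 else Real.exp (-a.toReal)

/-- `ρ(l) = exp(−∫₀^l [n((−∞,−φ₋(s)]) + n([φ₊(s),∞))] ds)`. -/
noncomputable def rho (μ n : MeasureTheory.Measure ℝ) (l : ℝ) : ℝ≥0∞ :=
  ENNReal.ofReal (expNegE (cutInt μ n (ENNReal.ofReal l)))

/-!
`D_μ` is the distribution function `y ↦ ν (-∞, y]` of the measure
`ν = 𝟙_{[0,∞)}(s) n([s,∞))⁻¹ μ(ds)`, which has no atoms. So its right-continuous inverse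
`T = D_μ⁻¹` satisfies `D_μ (T v) = v` for `v < c_μ`, and `T` pushes Lebesgue measure on
`(v₁, v₂)` forward to `ν` on `[T v₁, T v₂]`. Integrating `n([u,∞))` against `ν` cancels the
density, leaving `μ [T v₁, T v₂] = μ̄(T v₁) − μ̄(T v₂)`. The statement for `G_μ` is the one for
`D_μ` applied to the reflections of `μ` and `n` under `x ↦ -x`.
-/

open Set

section CDFInverse

variable {ν : Measure ℝ}

lemma measure_Iio_le_of_forall_lt {a : ℝ} {w : ℝ≥0∞} (h : ∀ y < a, ν (Iic y) ≤ w) :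
    ν (Iio a) ≤ w := by
  obtain ⟨u, hu_mono, hu_lt, hu_lim⟩ := exists_seq_strictMono_tendsto a
  have hIio : Iio a = ⋃ k, Iic (u k) := by
    refine Subset.antisymm (fun y hy => ?_) (iUnion_subset fun k => Iic_subset_Iio.2 (hu_lt k))
    obtain ⟨k, hk⟩ := (hu_lim.eventually (lt_mem_nhds (a := y) hy)).exists
    exact mem_iUnion.2 ⟨k, hk.le⟩
  rw [hIio, Monotone.measure_iUnion fun i j hij => Iic_subset_Iic.2 (hu_mono.monotone hij)]
  exact iSup_le fun k => h _ (hu_lt k)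

lemma le_measure_Iic_of_forall_gt {a : ℝ} {w : ℝ≥0∞} (hfin : ∃ y > a, ν (Iic y) ≠ ⊤)
    (h : ∀ y > a, w ≤ ν (Iic y)) : w ≤ ν (Iic a) := by
  have hlim := tendsto_measure_biInter_gt (μ := ν) (s := Iic) (a := a)
    (fun _ _ => measurableSet_Iic.nullMeasurableSet) (fun _ _ _ hij => Iic_subset_Iic.2 hij) hfin
  have hInter : (⋂ r > a, Iic r) = Iic a :=
    Set.ext fun x => by
      simpa using ⟨fun h => le_of_forall_gt_imp_ge_of_dense h, fun hxa _ hy => hxa.trans hy.le⟩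
  rw [hInter] at hlim
  exact ge_of_tendsto hlim (eventually_nhdsWithin_of_forall h)

noncomputable def cdfInv (ν : Measure ℝ) (w : ℝ≥0∞) : ℝ :=
  sInf {y | w < ν (Iic y)}

lemma lt_of_lt_measure_Iic {y₀ y : ℝ} {w : ℝ≥0∞} (h₀ : ν (Iic y₀) = 0) (h : w < ν (Iic y)) :
    y₀ < y :=
  lt_of_not_ge fun hy => (measure_mono_null (Iic_subset_Iic.2 hy) h₀ ▸ h).not_ge zero_le

lemma bddBelow_setOf_lt_measure_Iic {y₀ : ℝ} (h₀ : ν (Iic y₀) = 0) (w : ℝ≥0∞) :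
    BddBelow {y | w < ν (Iic y)} :=
  ⟨y₀, fun _ hy => (lt_of_lt_measure_Iic h₀ hy).le⟩

lemma cdfInv_le {w : ℝ≥0∞} {s : ℝ} (hbdd : BddBelow {y | w < ν (Iic y)})
    (h : w < ν (Iic s)) : cdfInv ν w ≤ s :=
  csInf_le hbdd h

lemma cdfInv_mono {w₁ w₂ : ℝ≥0∞} (hbdd : BddBelow {y | w₁ < ν (Iic y)})
    (hne : ∃ s, w₂ < ν (Iic s)) (h : w₁ ≤ w₂) : cdfInv ν w₁ ≤ cdfInv ν w₂ :=
  csInf_le_csInf hbdd hne fun _ hy => h.trans_lt hy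

lemma le_cdfInv {y₀ : ℝ} {w : ℝ≥0∞} (h₀ : ν (Iic y₀) = 0) (hne : ∃ s, w < ν (Iic s)) :
    y₀ ≤ cdfInv ν w :=
  le_csInf hne fun _ hy => (lt_of_lt_measure_Iic h₀ hy).le

lemma lt_measure_Iic_of_cdfInv_lt {w : ℝ≥0∞} {x : ℝ} (hne : ∃ s, w < ν (Iic s))
    (h : cdfInv ν w < x) : w < ν (Iic x) := by
  obtain ⟨z, hz, hzx⟩ := exists_lt_of_csInf_lt hne h
  exact lt_of_lt_of_le (b := ν (Iic z)) hz (measure_mono (Iic_subset_Iic.2 hzx.le))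

lemma measure_Iic_cdfInv_le [NullSingletonClass ν] {w : ℝ≥0∞}
    (hbdd : BddBelow {y | w < ν (Iic y)}) : ν (Iic (cdfInv ν w)) ≤ w := by
  rw [← measure_congr Iio_ae_eq_Iic]
  exact measure_Iio_le_of_forall_lt fun y hy =>
    not_lt.1 fun hwy => notMem_of_lt_csInf (s := {y | w < ν (Iic y)}) hy hbdd hwy

lemma cdfInv_lt [NullSingletonClass ν] {w : ℝ≥0∞} {s : ℝ}
    (hbdd : BddBelow {y | w < ν (Iic y)}) (h : w < ν (Iic s)) : cdfInv ν w < s :=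
  (cdfInv_le hbdd h).lt_of_ne fun hs => (measure_Iic_cdfInv_le hbdd).not_gt (hs ▸ h)

lemma measure_Iic_cdfInv [NullSingletonClass ν] {w : ℝ≥0∞} {s : ℝ}
    (hbdd : BddBelow {y | w < ν (Iic y)}) (h : w < ν (Iic s)) (hs : ν (Iic s) ≠ ⊤) :
    ν (Iic (cdfInv ν w)) = w := by
  exact (measure_Iic_cdfInv_le hbdd).antisymm
    (le_measure_Iic_of_forall_gt ⟨s, cdfInv_lt hbdd h, hs⟩ fun _ hy =>
      (lt_measure_Iic_of_cdfInv_lt ⟨s, h⟩ hy).le)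

lemma volume_setOf_cdfInv_le_inter_Ioo {v₁ v₂ : ℝ} (hv₁ : 0 ≤ v₁)
    (hbdd : ∀ w, BddBelow {y | w < ν (Iic y)})
    (hF : ∀ v ≤ v₂, ν (Iic (cdfInv ν (ENNReal.ofReal v))) = ENNReal.ofReal v)
    {s t : ℝ} (hst : ν (Iic s) = ENNReal.ofReal t) (ht : t ≤ v₂) :
    volume ({v | cdfInv ν (ENNReal.ofReal v) ≤ s} ∩ Ioo v₁ v₂) = ENNReal.ofReal (t - v₁) := by
  refine le_antisymm ?_ ?_
  · rw [← Real.volume_Ioc]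
    refine measure_mono fun v ⟨hvs, hv⟩ => ⟨hv.1, ?_⟩
    have : ENNReal.ofReal v ≤ ENNReal.ofReal t :=
      hF v hv.2.le ▸ hst ▸ measure_mono (Iic_subset_Iic.2 hvs)
    exact (ENNReal.ofReal_le_ofReal_iff'.1 this).resolve_right (hv₁.trans_lt hv.1).not_ge
  · rw [← Real.volume_Ioo]
    refine measure_mono fun v hv => ⟨cdfInv_le (hbdd _) ?_, hv.1, hv.2.trans_le ht⟩
    rw [hst]
    exact (ENNReal.ofReal_lt_ofReal_iff (hv₁.trans_lt (hv.1.trans hv.2))).2 hv.2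

lemma measure_Icc_eq_ofReal_sub {a s u t : ℝ} (hu : 0 ≤ u) (hau : ν (Iio a) = ENNReal.ofReal u)
    (has : a ≤ s) (hst : ν (Iic s) = ENNReal.ofReal t) :
    ν (Icc a s) = ENNReal.ofReal (t - u) := by
  have hsplit := measure_union (μ := ν) (s₁ := Iio a) (s₂ := Icc a s)
    ((Iio_disjoint_Ici le_rfl).mono_right Icc_subset_Ici_self) measurableSet_Icc
  rw [Iio_union_Icc_eq_Iic has, hst, hau, add_comm] at hsplit
  rw [ENNReal.ofReal_sub _ hu]
  exact ENNReal.eq_sub_of_add_eq ENNReal.ofReal_ne_top hsplit.symm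

lemma volume_setOf_cdfInv_le_inter_Ioo_eq_measure_Icc [NullSingletonClass ν] {v₁ v₂ : ℝ}
    (hv₁ : 0 ≤ v₁) (hv₁₂ : v₁ ≤ v₂) (hbdd : ∀ w, BddBelow {y | w < ν (Iic y)})
    (hF : ∀ v ≤ v₂, ν (Iic (cdfInv ν (ENNReal.ofReal v))) = ENNReal.ofReal v)
    {s : ℝ} (hs₁ : cdfInv ν (ENNReal.ofReal v₁) ≤ s) (hs₂ : s ≤ cdfInv ν (ENNReal.ofReal v₂)) :
    volume ({v | cdfInv ν (ENNReal.ofReal v) ≤ s} ∩ Ioo v₁ v₂) =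
      ν (Icc (cdfInv ν (ENNReal.ofReal v₁)) s) := by
  have hs : ν (Iic s) ≤ ENNReal.ofReal v₂ := hF v₂ le_rfl ▸ measure_mono (Iic_subset_Iic.2 hs₂)
  have hst : ν (Iic s) = ENNReal.ofReal (ν (Iic s)).toReal :=
    (ENNReal.ofReal_toReal (ne_top_of_le_ne_top ENNReal.ofReal_ne_top hs)).symm
  rw [volume_setOf_cdfInv_le_inter_Ioo hv₁ hbdd hF hst
      (ENNReal.toReal_le_of_le_ofReal (hv₁.trans hv₁₂) hs),
    measure_Icc_eq_ofReal_sub hv₁ ((measure_congr Iio_ae_eq_Iic).trans (hF v₁ hv₁₂)) hs₁ hst]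

lemma monotoneOn_cdfInv {y₀ v₂ : ℝ} (h₀ : ν (Iic y₀) = 0)
    (hv₂ : ∃ s, ENNReal.ofReal v₂ < ν (Iic s)) :
    MonotoneOn (fun v => cdfInv ν (ENNReal.ofReal v)) (Iic v₂) := fun _ _ _ hb hab =>
  cdfInv_mono (bddBelow_setOf_lt_measure_Iic h₀ _)
    (hv₂.imp fun _ hs => (ENNReal.ofReal_le_ofReal hb).trans_lt hs) (ENNReal.ofReal_le_ofReal hab)

lemma aemeasurable_cdfInv {y₀ v₁ v₂ : ℝ} (h₀ : ν (Iic y₀) = 0)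
    (hv₂ : ∃ s, ENNReal.ofReal v₂ < ν (Iic s)) :
    AEMeasurable (fun v => cdfInv ν (ENNReal.ofReal v)) (volume.restrict (Ioo v₁ v₂)) :=
  aemeasurable_restrict_of_monotoneOn measurableSet_Ioo
    ((monotoneOn_cdfInv h₀ hv₂).mono (Ioo_subset_Iio_self.trans Iio_subset_Iic_self))

theorem map_cdfInv_volume [NullSingletonClass ν] {y₀ : ℝ} (h₀ : ν (Iic y₀) = 0)
    {v₁ v₂ : ℝ} (hv₁ : 0 ≤ v₁) (hv₁₂ : v₁ ≤ v₂) {y : ℝ} (hy : ENNReal.ofReal v₂ < ν (Iic y))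
    (hy_fin : ν (Iic y) ≠ ⊤) :
    (volume.restrict (Ioo v₁ v₂)).map (fun v => cdfInv ν (ENNReal.ofReal v)) =
      ν.restrict (Icc (cdfInv ν (ENNReal.ofReal v₁)) (cdfInv ν (ENNReal.ofReal v₂))) := by
  set T := fun v : ℝ => cdfInv ν (ENNReal.ofReal v)
  have hbdd := bddBelow_setOf_lt_measure_Iic h₀
  have hlt : ∀ v ≤ v₂, ENNReal.ofReal v < ν (Iic y) := fun v hv =>
    (ENNReal.ofReal_le_ofReal hv).trans_lt hy
  have hF : ∀ v ≤ v₂, ν (Iic (T v)) = ENNReal.ofReal v := fun v hv =>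
    measure_Iic_cdfInv (hbdd _) (hlt v hv) hy_fin
  have hmono : MonotoneOn T (Iic v₂) := monotoneOn_cdfInv h₀ ⟨y, hy⟩
  refine Measure.ext_of_Iic _ _ fun s => ?_
  rw [Measure.map_apply_of_aemeasurable (aemeasurable_cdfInv h₀ ⟨y, hy⟩) measurableSet_Iic,
    Measure.restrict_apply' measurableSet_Ioo, Measure.restrict_apply measurableSet_Iic]
  rcases lt_or_ge s (T v₁) with hs | hs
  · have hmono₁ : ∀ v ∈ Ioo v₁ v₂, T v₁ ≤ T v := fun v hv =>
      hmono (mem_Iic.2 (hv.1.le.trans hv.2.le)) (mem_Iic.2 hv.2.le) hv.1.le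
    have hl : T ⁻¹' Iic s ∩ Ioo v₁ v₂ = ∅ :=
      eq_empty_of_forall_notMem fun v ⟨hvs, hv⟩ => hs.not_ge ((hmono₁ v hv).trans hvs)
    have hr : Iic s ∩ Icc (T v₁) (T v₂) = ∅ :=
      eq_empty_of_forall_notMem fun x ⟨hxs, hx⟩ => hs.not_ge (hx.1.trans hxs)
    rw [hl, hr, measure_empty, measure_empty]
  have hpre : T ⁻¹' Iic s ∩ Ioo v₁ v₂ = {v | T v ≤ min s (T v₂)} ∩ Ioo v₁ v₂ := by
    ext v
    simp only [mem_inter_iff, mem_preimage, mem_Iic, mem_ofPred_eq, le_min_iff]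
    exact ⟨fun h => ⟨⟨h.1, hmono h.2.2.le (mem_Iic.2 le_rfl) h.2.2.le⟩, h.2⟩,
      fun h => ⟨h.1.1, h.2⟩⟩
  have hIcc : Iic s ∩ Icc (T v₁) (T v₂) = Icc (T v₁) (min s (T v₂)) := by
    ext x
    simp only [mem_inter_iff, mem_Iic, mem_Icc, le_min_iff]
    tauto
  rw [hpre, hIcc, volume_setOf_cdfInv_le_inter_Ioo_eq_measure_Icc hv₁ hv₁₂ hbdd hF
    (le_min hs (hmono hv₁₂ (mem_Iic.2 le_rfl) hv₁₂)) (min_le_right _ _)]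

end CDFInverse

section DistributionFunction

variable (μ n : Measure ℝ)

noncomputable def dmuMeasure : Measure ℝ :=
  μ.withDensity ((Ici 0).indicator fun s => (n (Ici s))⁻¹)

lemma measurable_measure_Ici : Measurable fun s : ℝ => n (Ici s) :=
  Antitone.measurable fun _ _ hab => measure_mono (Ici_subset_Ici.2 hab)

instance [NullSingletonClass μ] : NullSingletonClass (dmuMeasure μ n) := by
  unfold dmuMeasure
  infer_instance

lemma dmuMeasure_Iic (y : ℝ) : dmuMeasure μ n (Iic y) = Dmu μ n y := by
  rw [dmuMeasure, withDensity_apply _ measurableSet_Iic, lintegral_indicator measurableSet_Ici,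
    Measure.restrict_restrict measurableSet_Ici, Ici_inter_Iic, Dmu]

lemma dmuMeasure_Iic_zero [NullSingletonClass μ] : dmuMeasure μ n (Iic 0) = 0 := by
  rw [dmuMeasure_Iic, Dmu, Icc_self]
  exact setLIntegral_measure_zero _ _ (measure_singleton 0)

lemma iSup_Dmu : ⨆ y, Dmu μ n y = dmuMeasure μ n univ := by
  simp_rw [← dmuMeasure_Iic]
  exact tendsto_nhds_unique
    (tendsto_atTop_iSup fun _ _ hab => measure_mono (Iic_subset_Iic.2 hab))
    (tendsto_measure_Iic_atTop _)

lemma DinvSet_eq [NullSingletonClass μ] (w : ℝ≥0∞) :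
    DinvSet μ n w = {y | w < dmuMeasure μ n (Iic y)} := by
  ext y
  simp only [DinvSet, mem_ofPred_eq, dmuMeasure_Iic]
  refine ⟨And.right, fun h => ⟨?_, h⟩⟩
  exact (lt_of_lt_measure_Iic (dmuMeasure_Iic_zero μ n) ((dmuMeasure_Iic μ n y).symm ▸ h)).le

lemma exists_lt_dmuMeasure_Iic {w : ℝ≥0∞} (hw : w < ⨆ y, Dmu μ n y) :
    ∃ s, w < dmuMeasure μ n (Iic s) := by
  simpa [dmuMeasure_Iic] using lt_iSup_iff.1 hw

lemma DinvSet_nonempty [NullSingletonClass μ] {w : ℝ≥0∞} (hw : w < ⨆ y, Dmu μ n y) :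
    (DinvSet μ n w).Nonempty :=
  DinvSet_eq μ n w ▸ exists_lt_dmuMeasure_Iic μ n hw

lemma mubarDinv_eq [NullSingletonClass μ] {w : ℝ≥0∞} (hw : w < ⨆ y, Dmu μ n y) :
    mubarDinv μ n w = (μ (Ici (cdfInv (dmuMeasure μ n) w))).toReal := by
  rw [mubarDinv, if_pos (DinvSet_nonempty μ n hw), DinvSet_eq, cdfInv]

lemma nDinv_eq [NullSingletonClass μ] {w : ℝ≥0∞} (hw : w < ⨆ y, Dmu μ n y) :
    nDinv μ n w = n (Ici (cdfInv (dmuMeasure μ n) w)) := by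
  rw [nDinv, if_pos (DinvSet_nonempty μ n hw), DinvSet_eq, cdfInv]

lemma Dmu_ne_top [IsFiniteMeasure μ] {x : ℝ} (hx : n (Ici x) ≠ 0) : Dmu μ n x ≠ ⊤ := by
  refine ne_top_of_le_ne_top
    (ENNReal.mul_ne_top (ENNReal.inv_ne_top.2 hx) (measure_ne_top μ (Icc 0 x))) ?_
  rw [Dmu, ← setLIntegral_const]
  exact setLIntegral_mono' measurableSet_Icc fun s hs =>
    ENNReal.inv_le_inv.2 (measure_mono (Ici_subset_Ici.2 hs.2))

lemma exists_lt_dmuMeasure_Iic_ne_top [IsFiniteMeasure μ] [NullSingletonClass μ]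
    (hsupp : ∀ x ∈ μ.support, 0 < n (Ici x)) {w : ℝ≥0∞} (hw : w < ⨆ y, Dmu μ n y) :
    ∃ y, w < dmuMeasure μ n (Iic y) ∧ dmuMeasure μ n (Iic y) ≠ ⊤ := by
  set ν := dmuMeasure μ n
  set T := cdfInv ν w
  have hne := exists_lt_dmuMeasure_Iic μ n hw
  have hT : ν (Iic T) ≤ w :=
    measure_Iic_cdfInv_le (bddBelow_setOf_lt_measure_Iic (dmuMeasure_Iic_zero μ n) w)
  have hν : ν (Ioi T) ≠ 0 := by
    intro h
    have := measure_union_le (μ := ν) (Iic T) (Ioi T)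
    rw [Iic_union_Ioi, h, add_zero, ← iSup_Dmu] at this
    exact (hw.trans_le this).not_ge hT
  obtain ⟨x, hxT, hx⟩ := Measure.nonempty_inter_support_of_pos
    (pos_iff_ne_zero.2 fun h => hν (withDensity_absolutelyContinuous μ _ h))
  refine ⟨x, lt_measure_Iic_of_cdfInv_lt hne hxT, ?_⟩
  rw [dmuMeasure_Iic]
  exact Dmu_ne_top μ n (hsupp x hx).ne'

lemma setLIntegral_measure_Ici_dmuMeasure [NullSingletonClass μ]
    (hfin : ∀ s, 0 < s → n (Ici s) < ⊤) (hsupp : ∀ x ∈ μ.support, 0 < n (Ici x))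
    {A : Set ℝ} (hA : MeasurableSet A) (hA₀ : A ⊆ Ici 0) :
    ∫⁻ u in A, n (Ici u) ∂dmuMeasure μ n = μ A := by
  have hdens : Measurable ((Ici (0 : ℝ)).indicator fun s => (n (Ici s))⁻¹) :=
    (measurable_measure_Ici n).inv.indicator measurableSet_Ici
  rw [dmuMeasure, restrict_withDensity hA,
    lintegral_withDensity_eq_lintegral_mul _ hdens (measurable_measure_Ici n)]
  have hone : ∀ᵐ u ∂μ.restrict A,
      ((Ici 0).indicator (fun s => (n (Ici s))⁻¹) * fun u => n (Ici u)) u = 1 := by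
    rw [ae_restrict_iff' hA]
    filter_upwards [Measure.support_mem_ae, compl_mem_ae_iff.2 (measure_singleton (μ := μ) 0)]
      with u hu hu₀ huA
    have hpos : 0 < u := (hA₀ huA).lt_of_ne' hu₀
    rw [Pi.mul_apply, indicator_of_mem (mem_Ici.2 hpos.le)]
    exact ENNReal.inv_mul_cancel (hsupp u hu).ne' (hfin u hpos).ne
  rw [lintegral_congr_ae hone, lintegral_one, Measure.restrict_apply_univ]

lemma ofReal_measure_Ici_sub_measure_Ici [IsFiniteMeasure μ] [NullSingletonClass μ] {a b : ℝ}
    (hab : a ≤ b) : ENNReal.ofReal ((μ (Ici a)).toReal - (μ (Ici b)).toReal) = μ (Icc a b) := by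
  rw [← Ico_union_Ici_eq_Ici hab,
    measure_union ((Iio_disjoint_Ici le_rfl).mono_left Ico_subset_Iio_self) measurableSet_Ici,
    ENNReal.toReal_add (measure_ne_top μ _) (measure_ne_top μ _), add_sub_cancel_right,
    ENNReal.ofReal_toReal (measure_ne_top μ _), measure_congr Ico_ae_eq_Icc]

end DistributionFunction

theorem ofReal_mubarDinv_sub_mubarDinv (μ n : Measure ℝ) [IsFiniteMeasure μ]
    [NullSingletonClass μ] (hfin : ∀ s, 0 < s → n (Ici s) < ⊤)
    (hsupp : ∀ x ∈ μ.support, 0 < n (Ici x))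
    {v₁ v₂ : ℝ} (hv₁ : 0 ≤ v₁) (hv₁₂ : v₁ ≤ v₂) (hv₂ : ENNReal.ofReal v₂ < ⨆ y, Dmu μ n y) :
    ENNReal.ofReal (mubarDinv μ n (ENNReal.ofReal v₁) - mubarDinv μ n (ENNReal.ofReal v₂)) =
      ∫⁻ v in Ioo v₁ v₂, nDinv μ n (ENNReal.ofReal v) := by
  set ν := dmuMeasure μ n
  set T := fun v : ℝ => cdfInv ν (ENNReal.ofReal v)
  have hlt : ∀ v ≤ v₂, ENNReal.ofReal v < ⨆ y, Dmu μ n y := fun v hv =>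
    (ENNReal.ofReal_le_ofReal hv).trans_lt hv₂
  obtain ⟨y, hy, hy_top⟩ := exists_lt_dmuMeasure_Iic_ne_top μ n hsupp hv₂
  have h₀ : ν (Iic 0) = 0 := dmuMeasure_Iic_zero μ n
  have hT₁ : 0 ≤ T v₁ := le_cdfInv h₀ (exists_lt_dmuMeasure_Iic μ n (hlt v₁ hv₁₂))
  have hT₁₂ : T v₁ ≤ T v₂ := cdfInv_mono (bddBelow_setOf_lt_measure_Iic h₀ _)
    (exists_lt_dmuMeasure_Iic μ n hv₂) (ENNReal.ofReal_le_ofReal hv₁₂)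
  calc ENNReal.ofReal (mubarDinv μ n (ENNReal.ofReal v₁) - mubarDinv μ n (ENNReal.ofReal v₂))
      = μ (Icc (T v₁) (T v₂)) := by
        rw [mubarDinv_eq μ n (hlt v₁ hv₁₂), mubarDinv_eq μ n hv₂]
        exact ofReal_measure_Ici_sub_measure_Ici μ hT₁₂
    _ = ∫⁻ u in Icc (T v₁) (T v₂), n (Ici u) ∂ν :=
        (setLIntegral_measure_Ici_dmuMeasure μ n hfin hsupp measurableSet_Icc
          fun u hu => hT₁.trans hu.1).symm
    _ = ∫⁻ u, n (Ici u) ∂(volume.restrict (Ioo v₁ v₂)).map T := by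
        rw [map_cdfInv_volume h₀ hv₁ hv₁₂ hy hy_top]
    _ = ∫⁻ v in Ioo v₁ v₂, n (Ici (T v)) :=
        lintegral_map' (measurable_measure_Ici n).aemeasurable (aemeasurable_cdfInv h₀ ⟨y, hy⟩)
    _ = ∫⁻ v in Ioo v₁ v₂, nDinv μ n (ENNReal.ofReal v) :=
        setLIntegral_congr_fun measurableSet_Ioo fun v hv => (nDinv_eq μ n (hlt v hv.2.le)).symm

section Reflection

variable (μ n : Measure ℝ)

instance [IsFiniteMeasure μ] : IsFiniteMeasure μ.neg := by
  unfold Measure.neg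
  infer_instance

instance [NullSingletonClass μ] : NullSingletonClass μ.neg :=
  ⟨fun x => by rw [Measure.neg_apply, neg_singleton]; exact measure_singleton _⟩

lemma neg_mem_support_of_mem_support_neg {x : ℝ} (hx : x ∈ μ.neg.support) : -x ∈ μ.support := by
  rw [Measure.mem_support_iff_forall] at hx ⊢
  intro U hU
  simpa [Measure.neg_apply] using hx _ (continuous_neg.continuousAt.preimage_mem_nhds hU)

lemma Dmu_neg (y : ℝ) : Dmu μ.neg n.neg y = Gmu μ n (-y) := by
  have hf : Measurable fun s : ℝ => (n.neg (Ici s))⁻¹ := (measurable_measure_Ici n.neg).inv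
  rw [Dmu, Gmu, Measure.neg, setLIntegral_map measurableSet_Icc hf measurable_neg]
  simp [Measure.neg_apply]

lemma iSup_Dmu_neg : ⨆ y, Dmu μ.neg n.neg y = ⨆ x, Gmu μ n x := by
  simp_rw [Dmu_neg]
  exact (Equiv.neg ℝ).iSup_comp (g := Gmu μ n)

lemma DinvSet_neg (w : ℝ≥0∞) : DinvSet μ.neg n.neg w = -GinvSet μ n w := by
  ext y
  simp [DinvSet, GinvSet, Dmu_neg]

lemma sInf_DinvSet_neg (w : ℝ≥0∞) : sInf (DinvSet μ.neg n.neg w) = -sSup (GinvSet μ n w) := by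
  rw [DinvSet_neg, Real.sInf_def, neg_neg]

lemma nGinv_eq_nDinv_neg (w : ℝ≥0∞) : nGinv μ n w = nDinv μ.neg n.neg w := by
  simp only [nGinv, nDinv, sInf_DinvSet_neg]
  simp only [DinvSet_neg, nonempty_neg, Measure.neg_apply, neg_Ici, neg_neg]

lemma mubarGinv_eq_one_sub [IsProbabilityMeasure μ] [NullSingletonClass μ] {w : ℝ≥0∞}
    (hw : w < ⨆ x, Gmu μ n x) : mubarGinv μ n w = 1 - mubarDinv μ.neg n.neg w := by
  have hne := DinvSet_nonempty μ.neg n.neg ((iSup_Dmu_neg μ n).symm ▸ hw)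
  rw [mubarGinv, if_pos (nonempty_neg.1 (DinvSet_neg μ n w ▸ hne)), mubarDinv, if_pos hne,
    sInf_DinvSet_neg, Measure.neg_apply, neg_Ici, neg_neg, ← measure_congr Ioi_ae_eq_Ici,
    ← compl_Iic, prob_compl_eq_one_sub measurableSet_Iic,
    ENNReal.toReal_sub_of_le prob_le_one ENNReal.one_ne_top, ENNReal.toReal_one]

end Reflection

theorem ofReal_mubarGinv_sub_mubarGinv (μ n : Measure ℝ) [IsProbabilityMeasure μ]
    [NullSingletonClass μ] (hfin : ∀ s, 0 < s → n (Iic (-s)) < ⊤)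
    (hsupp : ∀ x ∈ μ.support, 0 < n (Iic x))
    {v₁ v₂ : ℝ} (hv₁ : 0 ≤ v₁) (hv₁₂ : v₁ ≤ v₂) (hv₂ : ENNReal.ofReal v₂ < ⨆ x, Gmu μ n x) :
    ENNReal.ofReal (mubarGinv μ n (ENNReal.ofReal v₂) - mubarGinv μ n (ENNReal.ofReal v₁)) =
      ∫⁻ v in Ioo v₁ v₂, nGinv μ n (ENNReal.ofReal v) := by
  rw [mubarGinv_eq_one_sub μ n hv₂,
    mubarGinv_eq_one_sub μ n ((ENNReal.ofReal_le_ofReal hv₁₂).trans_lt hv₂),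
    sub_sub_sub_cancel_left]
  simp_rw [nGinv_eq_nDinv_neg]
  refine ofReal_mubarDinv_sub_mubarDinv μ.neg n.neg (fun s hs => ?_) (fun x hx => ?_) hv₁ hv₁₂
    ((iSup_Dmu_neg μ n).symm ▸ hv₂)
  · rw [Measure.neg_apply, neg_Ici]
    exact hfin s hs
  · rw [Measure.neg_apply, neg_Ici]
    exact hsupp _ (neg_mem_support_of_mem_support_neg μ hx)

lemma measSupport_eq_support (μ : Measure ℝ) : measSupport μ = μ.support := by
  ext x
  simp only [measSupport, Measure.support_eq_forall_isOpen, mem_ofPred_eq]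
  exact forall_congr' fun _ => ⟨fun h h₁ h₂ => h h₂ h₁, fun h h₁ h₂ => h h₂ h₁⟩

theorem derivativesOfComposedTails_general
    (μ n : MeasureTheory.Measure ℝ) [MeasureTheory.IsProbabilityMeasure μ]
    (hatomless : ∀ x : ℝ, μ {x} = 0)
    (hnfin : ∀ s : ℝ, 0 < s → n (Set.Ici s) < ⊤ ∧ n (Set.Iic (-s)) < ⊤)
    (hnsupp : ∀ x ∈ measSupport μ, 0 < n (Set.Iic x) ∧ 0 < n (Set.Ici x))
    (hcompat : (⨆ y : ℝ, Dmu μ n y) = (⨆ x : ℝ, Gmu μ n x))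
    (v₁ v₂ : ℝ) (hv₁ : 0 ≤ v₁) (hv₁₂ : v₁ ≤ v₂)
    (hv₂ : ENNReal.ofReal v₂ < ⨆ y : ℝ, Dmu μ n y) :
    (ENNReal.ofReal (mubarDinv μ n (ENNReal.ofReal v₁) - mubarDinv μ n (ENNReal.ofReal v₂))
        = ∫⁻ v in Set.Ioo v₁ v₂, nDinv μ n (ENNReal.ofReal v)) ∧
    (ENNReal.ofReal (mubarGinv μ n (ENNReal.ofReal v₂) - mubarGinv μ n (ENNReal.ofReal v₁))
        = ∫⁻ v in Set.Ioo v₁ v₂, nGinv μ n (ENNReal.ofReal v)) := by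
  have : NullSingletonClass μ := ⟨hatomless⟩
  rw [measSupport_eq_support] at hnsupp
  exact ⟨ofReal_mubarDinv_sub_mubarDinv μ n (fun s hs => (hnfin s hs).1)
      (fun x hx => (hnsupp x hx).2) hv₁ hv₁₂ hv₂,
    ofReal_mubarGinv_sub_mubarGinv μ n (fun s hs => (hnfin s hs).2)
      (fun x hx => (hnsupp x hx).1) hv₁ hv₁₂ (hcompat ▸ hv₂)⟩

/-- Set `c_μ = D_μ(∞)` (the limit of the non-decreasing function `D_μ`,
i.e. `⨆ y, D_μ(y)`).  For all `0 ≤ v₁ ≤ v₂ < c_μ`: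
`μ̄(D_μ⁻¹(v₁)) − μ̄(D_μ⁻¹(v₂)) = ∫_{v₁}^{v₂} n([D_μ⁻¹(v),∞)) dv` and
`μ̄(G_μ⁻¹(v₂)) − μ̄(G_μ⁻¹(v₁)) = ∫_{v₁}^{v₂} n((−∞,G_μ⁻¹(v)]) dv`. -/
theorem derivativesOfComposedTails
    (μ n : MeasureTheory.Measure ℝ) [MeasureTheory.IsProbabilityMeasure μ]
    (hatomless : ∀ x : ℝ, μ {x} = 0)
    (hneg : 0 < μ (Set.Iio (0 : ℝ))) (hpos : 0 < μ (Set.Ioi (0 : ℝ)))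
    (hnfin : ∀ s : ℝ, 0 < s → n (Set.Ici s) < ⊤ ∧ n (Set.Iic (-s)) < ⊤)
    (hnsupp : ∀ x ∈ measSupport μ, 0 < n (Set.Iic x) ∧ 0 < n (Set.Ici x))
    (hcompat : (⨆ y : ℝ, Dmu μ n y) = (⨆ x : ℝ, Gmu μ n x))
    (v₁ v₂ : ℝ) (hv₁ : 0 ≤ v₁) (hv₁₂ : v₁ ≤ v₂)
    (hv₂ : ENNReal.ofReal v₂ < ⨆ y : ℝ, Dmu μ n y) :
    (ENNReal.ofReal (mubarDinv μ n (ENNReal.ofReal v₁) - mubarDinv μ n (ENNReal.ofReal v₂))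
        = ∫⁻ v in Set.Ioo v₁ v₂, nDinv μ n (ENNReal.ofReal v)) ∧
    (ENNReal.ofReal (mubarGinv μ n (ENNReal.ofReal v₂) - mubarGinv μ n (ENNReal.ofReal v₁))
        = ∫⁻ v in Set.Ioo v₁ v₂, nGinv μ n (ENNReal.ofReal v)) :=
  derivativesOfComposedTails_general μ n hatomless hnfin hnsupp hcompat v₁ v₂ hv₁ hv₁₂ hv₂
end

section
/- Weibull law: let a > 0, b > 0, let μ be the probability measure on (0,∞) with density x ↦ a·b·x^{b−1}·e^{−a·x^b} with respect to Lebesgue measure, and let n be the measure on (0,∞) with density x ↦ x⁻², so that n([s,∞)) = 1/s for s > 0. Then ψ_μ(x) = a·b·x^{b+1}/(b+1) for every x ≥ 0, and φ_μ(x) = ((b+1)·x/(a·b))^{1/(b+1)} for every x ≥ 0. In particular, for the exponential law with parameter a (b = 1), φ_μ(x) = √(2x/a). -/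
open MeasureTheory Filter
open scoped ENNReal Topology Classical

/-- The dual Hardy–Littlewood function `ψ_μ` of `μ` relative to `n`:
`ψ_μ(y) = ∫_{(0,y)} 1_{μ({s})=0} [μ̄(s)·n([s,∞))]⁻¹ dμ(s)
          + Σ_{0<s<y, μ({s})>0} log(μ̄(s)/μ̄(s+)) / n([s,∞))`,
with values in `[0,∞]` (and `ψ_μ(y) = 0` for `y ≤ 0`). -/
noncomputable def dualHL (μ n : MeasureTheory.Measure ℝ) (y : ℝ) : ℝ≥0∞ :=
  (∫⁻ s in Set.Ioo (0 : ℝ) y,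
      Set.indicator {t : ℝ | μ {t} = 0}
        (fun t => (μ (Set.Ici t) * n (Set.Ici t))⁻¹) s ∂μ)
  + ∑' s : {t : ℝ // 0 < t ∧ t < y ∧ 0 < μ {t}},
      ENNReal.ofReal
          (Real.log ((μ (Set.Ici (s : ℝ))).toReal / (μ (Set.Ioi (s : ℝ))).toReal))
        / n (Set.Ici (s : ℝ))

/-- The right-continuous inverse `φ_μ(l) = inf{y > 0 : ψ_μ(y) > l}`, with `inf ∅ = ∞`. -/
noncomputable def phiHL (μ n : MeasureTheory.Measure ℝ) (l : ℝ) : ℝ≥0∞ :=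
  if ({y : ℝ | 0 < y ∧ ENNReal.ofReal l < dualHL μ n y}).Nonempty
  then ENNReal.ofReal (sInf {y : ℝ | 0 < y ∧ ENNReal.ofReal l < dualHL μ n y})
  else ⊤

/-! The Weibull law has no atoms and survival function `μ̄(t) = exp(-a tᵇ)`, while `n([t,∞)) = 1/t`.
So the integrand of `ψ_μ` is `t·exp(a tᵇ)` against `dμ`, i.e. `a b tᵇ` against Lebesgue measure,
and `ψ_μ(x) = a b x^{b+1}/(b+1)`; this is strictly increasing, so `φ_μ` is its explicit inverse. -/

open Set

section General

variable {μ n : Measure ℝ}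

theorem dualHL_of_nullSingletonClass [NullSingletonClass μ] (y : ℝ) :
    dualHL μ n y = ∫⁻ s in Ioo 0 y, (μ (Ici s) * n (Ici s))⁻¹ ∂μ := by
  have hatoms : {t : ℝ | μ {t} = 0} = univ := eq_univ_of_forall measure_singleton
  have : IsEmpty {t : ℝ // 0 < t ∧ t < y ∧ 0 < μ {t}} :=
    ⟨fun s => (s.2.2.2.trans_eq (measure_singleton _)).false⟩
  rw [dualHL, hatoms, indicator_univ, tsum_empty, add_zero]

theorem phiHL_eq_of_forall_lt_dualHL_iff {l c : ℝ} (hc : 0 ≤ c)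
    (h : ∀ y, 0 < y → (ENNReal.ofReal l < dualHL μ n y ↔ c < y)) :
    phiHL μ n l = ENNReal.ofReal c := by
  have hS : {y : ℝ | 0 < y ∧ ENNReal.ofReal l < dualHL μ n y} = Ioi c := by
    ext y
    simp only [mem_ofPred_eq, mem_Ioi]
    exact ⟨fun ⟨hy, hlt⟩ => (h y hy).mp hlt,
      fun hy => ⟨hc.trans_lt hy, (h y (hc.trans_lt hy)).mpr hy⟩⟩
  rw [phiHL, hS, if_pos nonempty_Ioi, csInf_Ioi]

end General

theorem lintegral_Ioi_ofReal_eq_of_hasDerivAt {F f : ℝ → ℝ} {t L : ℝ}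
    (hcont : ContinuousWithinAt F (Ici t) t) (hderiv : ∀ x ∈ Ioi t, HasDerivAt F (f x) x)
    (hf : ∀ x ∈ Ioi t, 0 ≤ f x) (hF : Tendsto F atTop (𝓝 L)) :
    ∫⁻ x in Ioi t, ENNReal.ofReal (f x) = ENNReal.ofReal (L - F t) := by
  rw [← ofReal_integral_eq_lintegral_ofReal (integrableOn_Ioi_deriv_of_nonneg hcont hderiv hf hF)
      (ae_restrict_of_forall_mem measurableSet_Ioi hf),
    integral_Ioi_of_hasDerivAt_of_nonneg hcont hderiv hf hF]

theorem lintegral_Ioo_zero_ofReal_rpow {r x : ℝ} (hr : 0 ≤ r) (hx : 0 ≤ x) :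
    ∫⁻ s in Ioo 0 x, ENNReal.ofReal (s ^ r) = ENNReal.ofReal (x ^ (r + 1) / (r + 1)) := by
  have hint : IntegrableOn (fun s : ℝ => s ^ r) (Ioo 0 x) :=
    (intervalIntegral.intervalIntegrable_rpow' (a := 0) (b := x) (by linarith)).1.mono_set
      Ioo_subset_Ioc_self
  rw [← ofReal_integral_eq_lintegral_ofReal hint
      (ae_restrict_of_forall_mem measurableSet_Ioo fun s hs => Real.rpow_nonneg hs.1.le r),
    ← integral_Ioc_eq_integral_Ioo, ← intervalIntegral.integral_of_le hx,
    integral_rpow (Or.inl (by linarith)), Real.zero_rpow (by linarith), sub_zero]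

theorem withDensity_restrict_Ioi_apply_Ici {f : ℝ → ℝ≥0∞} {c t : ℝ} (hct : c < t) :
    (volume.restrict (Ioi c)).withDensity f (Ici t) = ∫⁻ x in Ioi t, f x := by
  rw [withDensity_apply _ measurableSet_Ici, Measure.restrict_restrict measurableSet_Ici,
    inter_eq_left.mpr (Ici_subset_Ioi.mpr hct)]
  exact setLIntegral_congr Ioi_ae_eq_Ici.symm

noncomputable def weibullMeasure (a b : ℝ) : Measure ℝ :=
  (volume.restrict (Ioi 0)).withDensity
    fun x => ENNReal.ofReal (a * b * x ^ (b - 1) * Real.exp (-(a * x ^ b)))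

noncomputable def inverseSquareMeasure : Measure ℝ :=
  (volume.restrict (Ioi 0)).withDensity fun x => ENNReal.ofReal ((x ^ 2)⁻¹)

instance weibullMeasure.instNullSingletonClass (a b : ℝ) :
    NullSingletonClass (weibullMeasure a b) := by
  unfold weibullMeasure; infer_instance

theorem inverseSquareMeasure_Ici {t : ℝ} (ht : 0 < t) :
    inverseSquareMeasure (Ici t) = ENNReal.ofReal t⁻¹ := by
  have hderiv : ∀ x ∈ Ioi t, HasDerivAt (fun y : ℝ => -y⁻¹) ((x ^ 2)⁻¹) x := fun x hx => by
    have h : HasDerivAt (fun y : ℝ => -y⁻¹) (-(-(x ^ 2)⁻¹)) x :=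
      (hasDerivAt_inv (ht.trans hx).ne').neg
    rwa [neg_neg] at h
  have hlim : Tendsto (fun y : ℝ => -y⁻¹) atTop (𝓝 0) := by
    simpa using (tendsto_inv_atTop_zero (𝕜 := ℝ)).neg
  rw [inverseSquareMeasure, withDensity_restrict_Ioi_apply_Ici ht,
    lintegral_Ioi_ofReal_eq_of_hasDerivAt (continuousAt_inv₀ ht.ne').neg.continuousWithinAt
      hderiv (fun x _ => by positivity) hlim]
  norm_num

section Weibull

variable {a b : ℝ}

theorem hasDerivAt_neg_exp_neg_mul_rpow {x : ℝ} (hx : 0 < x) :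
    HasDerivAt (fun y : ℝ => -Real.exp (-(a * y ^ b)))
      (a * b * x ^ (b - 1) * Real.exp (-(a * x ^ b))) x := by
  have hinner : HasDerivAt (fun y : ℝ => -(a * y ^ b)) (-(a * (b * x ^ (b - 1)))) x :=
    ((Real.hasDerivAt_rpow_const (Or.inl hx.ne')).const_mul a).neg
  have h : HasDerivAt (fun y : ℝ => -Real.exp (-(a * y ^ b))) _ x :=
    ((Real.hasDerivAt_exp _).comp x hinner).neg
  convert h using 1
  ring

theorem tendsto_neg_exp_neg_mul_rpow_atTop (ha : 0 < a) (hb : 0 < b) :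
    Tendsto (fun y : ℝ => -Real.exp (-(a * y ^ b))) atTop (𝓝 0) := by
  simpa using (Real.tendsto_exp_atBot.comp (tendsto_neg_atTop_atBot.comp
    ((tendsto_rpow_atTop hb).const_mul_atTop ha))).neg

theorem weibullMeasure_Ici (ha : 0 < a) (hb : 0 < b) {t : ℝ} (ht : 0 < t) :
    weibullMeasure a b (Ici t) = ENNReal.ofReal (Real.exp (-(a * t ^ b))) := by
  have hf : ∀ x ∈ Ioi t, 0 ≤ a * b * x ^ (b - 1) * Real.exp (-(a * x ^ b)) := fun x hx => by
    have := (ht.trans hx).le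
    positivity
  rw [weibullMeasure, withDensity_restrict_Ioi_apply_Ici ht,
    lintegral_Ioi_ofReal_eq_of_hasDerivAt
      (hasDerivAt_neg_exp_neg_mul_rpow ht).continuousAt.continuousWithinAt
      (fun x hx => hasDerivAt_neg_exp_neg_mul_rpow (ht.trans hx)) hf
      (tendsto_neg_exp_neg_mul_rpow_atTop ha hb)]
  norm_num

theorem dualHL_weibullMeasure (ha : 0 < a) (hb : 0 < b) {x : ℝ} (hx : 0 ≤ x) :
    dualHL (weibullMeasure a b) inverseSquareMeasure x
      = ENNReal.ofReal (a * b * x ^ (b + 1) / (b + 1)) := by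
  have hweight : ∀ s ∈ Ioo 0 x,
      (weibullMeasure a b (Ici s) * inverseSquareMeasure (Ici s))⁻¹
        = ENNReal.ofReal (s * Real.exp (a * s ^ b)) := fun s hs => by
    have hs0 : 0 < s := hs.1
    rw [weibullMeasure_Ici ha hb hs0, inverseSquareMeasure_Ici hs0,
      ← ENNReal.ofReal_mul (Real.exp_pos _).le, ← ENNReal.ofReal_inv_of_pos (by positivity),
      mul_inv, inv_inv, Real.exp_neg, inv_inv, mul_comm]
  have hdensity : ∀ s ∈ Ioo 0 x,
      ENNReal.ofReal (a * b * s ^ (b - 1) * Real.exp (-(a * s ^ b)))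
        * ENNReal.ofReal (s * Real.exp (a * s ^ b))
        = ENNReal.ofReal (a * b) * ENNReal.ofReal (s ^ b) := fun s hs => by
    have hs0 : 0 < s := hs.1
    rw [← ENNReal.ofReal_mul (by positivity), ← ENNReal.ofReal_mul (by positivity)]
    congr 1
    calc a * b * s ^ (b - 1) * Real.exp (-(a * s ^ b)) * (s * Real.exp (a * s ^ b))
        = a * b * (s ^ (b - 1) * s) * (Real.exp (-(a * s ^ b)) * Real.exp (a * s ^ b)) := by ring
      _ = a * b * s ^ b := by
        rw [← Real.rpow_add_one hs0.ne', sub_add_cancel, ← Real.exp_add, neg_add_cancel,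
          Real.exp_zero, mul_one]
  rw [dualHL_of_nullSingletonClass, setLIntegral_congr_fun measurableSet_Ioo hweight,
    weibullMeasure, restrict_withDensity measurableSet_Ioo,
    Measure.restrict_restrict measurableSet_Ioo, inter_eq_left.mpr fun s hs => hs.1,
    lintegral_withDensity_eq_lintegral_mul _ (by fun_prop) (by fun_prop)]
  simp only [Pi.mul_apply]
  rw [setLIntegral_congr_fun measurableSet_Ioo hdensity, lintegral_const_mul _ (by fun_prop),
    lintegral_Ioo_zero_ofReal_rpow hb.le hx, ← ENNReal.ofReal_mul (by positivity), mul_div_assoc]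

theorem phiHL_weibullMeasure (ha : 0 < a) (hb : 0 < b) {l : ℝ} (hl : 0 ≤ l) :
    phiHL (weibullMeasure a b) inverseSquareMeasure l
      = ENNReal.ofReal (((b + 1) * l / (a * b)) ^ (1 / (b + 1))) := by
  have hb1 : 0 < b + 1 := by linarith
  have hbase : 0 ≤ (b + 1) * l / (a * b) := by positivity
  set c := ((b + 1) * l / (a * b)) ^ (1 / (b + 1)) with hc_def
  have hc0 : 0 ≤ c := Real.rpow_nonneg hbase _
  have hmono : StrictMonoOn (fun y : ℝ => a * b * y ^ (b + 1) / (b + 1)) (Ici 0) :=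
    fun y (hy : 0 ≤ y) z _ hyz => by dsimp only; gcongr
  have hc : a * b * c ^ (b + 1) / (b + 1) = l := by
    rw [hc_def, one_div, Real.rpow_inv_rpow hbase hb1.ne']
    field_simp
  refine phiHL_eq_of_forall_lt_dualHL_iff hc0 fun y hy => ?_
  rw [dualHL_weibullMeasure ha hb hy.le, ENNReal.ofReal_lt_ofReal_iff_of_nonneg hl, ← hc]
  exact hmono.lt_iff_lt hc0 hy.le

end Weibull

/-- Weibull law: for `μ` with density `a·b·x^{b−1}·e^{−a·x^b}` on `(0,∞)`
and `n` with density `x⁻²` on `(0,∞)` (so `n([s,∞)) = 1/s`),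
`ψ_μ(x) = a·b·x^{b+1}/(b+1)` and `φ_μ(x) = ((b+1)·x/(a·b))^{1/(b+1)}` for `x ≥ 0`;
in particular for the exponential law with parameter `a` (`b = 1`), `φ_μ(x) = √(2x/a)`. -/
theorem weibullDualHL (a b : ℝ) (ha : 0 < a) (hb : 0 < b)
    (μ n : MeasureTheory.Measure ℝ)
    (hμ : μ = (MeasureTheory.volume.restrict (Set.Ioi (0 : ℝ))).withDensity
        (fun x => ENNReal.ofReal (a * b * x ^ (b - 1) * Real.exp (-(a * x ^ b)))))
    (hn : n = (MeasureTheory.volume.restrict (Set.Ioi (0 : ℝ))).withDensity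
        (fun x => ENNReal.ofReal ((x ^ 2)⁻¹))) :
    (∀ x : ℝ, 0 ≤ x → dualHL μ n x = ENNReal.ofReal (a * b * x ^ (b + 1) / (b + 1))) ∧
    (∀ x : ℝ, 0 ≤ x →
        phiHL μ n x = ENNReal.ofReal (((b + 1) * x / (a * b)) ^ (1 / (b + 1)))) ∧
    (b = 1 → ∀ x : ℝ, 0 ≤ x → phiHL μ n x = ENNReal.ofReal (Real.sqrt (2 * x / a))) := by
  subst hμ hn
  refine ⟨fun x hx => dualHL_weibullMeasure ha hb hx,
    fun x hx => phiHL_weibullMeasure ha hb hx, ?_⟩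
  rintro rfl x hx
  refine (phiHL_weibullMeasure ha hb hx).trans ?_
  rw [Real.sqrt_eq_rpow]
  norm_num
end
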